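/- For every β > 0, r > 0 and x ∈ ℝ^d with x ≠ 0 one has the identity N^β(r,x) = β^{-(d−1)/2} |x|^{-(d−1)} ∫_{β|x|²/r}^∞ t^{(d−3)/2} e^{−t} dt. Moreover, there exist constants c₁ = c₁(d,β) > 0 and c₂ = c₂(d,β) > 0 such that for all r > 0 and x ≠ 0: c₁ |x|^{-(d−1)} · 1_{{|x| ≤ √r}} ≤ N^β(r,x) ≤ c₂ · H^1(r,x). -/

import Mathlib

/-!
The substitution `t = β |x|² / u` turns `N^β(r, x)` into
`β^{-(d-1)/2} |x|^{-(d-1)} Γ((d-1)/2, β |x|² / r)`, with `Γ(a, w)` the upper incomplete gamma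
function. Since `Γ(a, w)` is positive and decreasing in `w`, it is at least `Γ(a, β)` when
`|x| ≤ √r`; it is at most `Γ(a)`, and at most `Γ(a + 1) / w`, which gives the two branches of
`H^1`.
-/

open MeasureTheory Filter
open scoped Topology RealInnerProductSpace

noncomputable section

/-- Euclidean space `ℝ^d`. -/
abbrev Euc (d : ℕ) := EuclideanSpace ℝ (Fin d)

/-- The transition density `p^a_n(t,z)` of the Lévy process with generator
`Δ + a^α Δ^{α/2}` in dimension `n`:
`p^a_n(t,z) = (2π)^{-n} ∫ e^{-i z·ξ} e^{-t(|ξ|² + a^α |ξ|^α)} dξ`. -/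
def pker (n : ℕ) (α a t : ℝ) (z : Euc n) : ℝ :=
  (2 * Real.pi) ^ (-(n : ℝ)) *
    (∫ ξ : Euc n,
      Complex.exp (-(Complex.I * (⟪z, ξ⟫ : ℂ))) *
        (Real.exp (-t * (‖ξ‖ ^ 2 + a ^ α * ‖ξ‖ ^ α)) : ℂ)).re

/-- The Gaussian-type kernel `g_{n,β}(t,r) = t^{-n/2} exp(-β r² / t)`, as a function of
the radial variable `r = |z|` (with a real dimension parameter `n`). -/
def gker (n β t r : ℝ) : ℝ := t ^ (-n / 2) * Real.exp (-(β * r ^ 2) / t)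

/-- The comparison kernel
`q^a_{n,β}(t,r) = t^{-n/2} exp(-β r²/t) + min (t^{-n/2}) (a^α t / r^{n+α})`, as a function of
the radial variable `r = |z|` (with the convention that at `r = 0` the second summand
equals `t^{-n/2}`, since `a^α t / r^{n+α} = +∞` there). -/
def qker (α n β a t r : ℝ) : ℝ :=
  gker n β t r +
    (if r = 0 then t ^ (-n / 2) else min (t ^ (-n / 2)) (a ^ α * t / r ^ (n + α)))

/-- The kernel `H^β(r,s) = min (s^{-(d-1)}) (r^β s^{-(d-1+2β)})`, as a function of the
radial variable `s = |z|`. -/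
def Hker (d : ℕ) (β r s : ℝ) : ℝ :=
  min (s ^ (-((d : ℝ) - 1))) (r ^ β * s ^ (-((d : ℝ) - 1 + 2 * β)))

/-- `N^β(r,s) = ∫_0^r u^{-(d+1)/2} exp(-β s²/u) du`, as a function of the radial
variable `s = |z|`. -/
def Nker (d : ℕ) (β r s : ℝ) : ℝ :=
  ∫ u in Set.Ioc (0 : ℝ) r, u ^ (-((d : ℝ) + 1) / 2) * Real.exp (-(β * s ^ 2) / u)

/-- `H_f^β(r,x) = ∫ |f(y)| H^β(r, x - y) dy`. -/
def HInt (d k : ℕ) (f : Euc d → Euc k) (β r : ℝ) (x : Euc d) : ℝ :=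
  ∫ y : Euc d, ‖f y‖ * Hker d β r ‖x - y‖

/-- The Kato-type quantity `M_f(r) = sup_x ∫_{|x-y|<r} |f(y)| / |x-y|^{d-1} dy`. -/
def MK (d k : ℕ) (f : Euc d → Euc k) (r : ℝ) : ℝ :=
  ⨆ x : Euc d, ∫ y in Metric.ball x r, ‖f y‖ / ‖x - y‖ ^ ((d : ℝ) - 1)

/-- `f` belongs to the Kato class `K_{d,1}` iff `M_f(r) → 0` as `r ↓ 0`. -/
def KatoClass (d k : ℕ) (f : Euc d → Euc k) : Prop :=
  Filter.Tendsto (MK d k f) (𝓝[>] (0 : ℝ)) (𝓝 0)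

/-- The iterated kernels `p_k^{a,b}`:  `p_0^{a,b}(t,x,y) = p^a(t,x-y)` and
`p_k^{a,b}(t,x,y) = ∫_0^t ∫ p_{k-1}^{a,b}(t-s,x,z) (b(z)·∇p^a(s,z-y)) dz ds`. -/
def pk (d : ℕ) (α a : ℝ) (b : Euc d → Euc d) : ℕ → ℝ → Euc d → Euc d → ℝ
  | 0 => fun t x y => pker d α a t (x - y)
  | k + 1 => fun t x y =>
      ∫ s in Set.Ioc (0 : ℝ) t, ∫ z : Euc d,
        pk d α a b k (t - s) x z * ⟪b z, gradient (pker d α a s) (z - y)⟫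

/-- The majorizing iterated kernels `|p|_k^{a,b}`. -/
def apk (d : ℕ) (α a : ℝ) (b : Euc d → Euc d) : ℕ → ℝ → Euc d → Euc d → ℝ
  | 0 => fun t x y => pker d α a t (x - y)
  | k + 1 => fun t x y =>
      ∫ s in Set.Ioc (0 : ℝ) t, ∫ z : Euc d,
        apk d α a b k (t - s) x z * (‖b z‖ * ‖gradient (pker d α a s) (z - y)‖)

open Real Set

/-- `Γ(s, w)`, the upper incomplete gamma function. -/
def upperGamma (s w : ℝ) : ℝ := ∫ t in Ioi w, t ^ (s - 1) * exp (-t)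

section upperGamma

variable {s w : ℝ}

lemma integrableOn_rpow_sub_one_mul_exp_neg (hs : 0 < s) (hw : 0 ≤ w) :
    IntegrableOn (fun t : ℝ => t ^ (s - 1) * exp (-t)) (Ioi w) :=
  ((GammaIntegral_convergent hs).mono_set (Ioi_subset_Ioi hw)).congr_fun
    (fun _ _ => mul_comm _ _) measurableSet_Ioi

lemma rpow_sub_one_mul_exp_neg_nonneg_ae (hw : 0 ≤ w) :
    0 ≤ᵐ[volume.restrict (Ioi w)] fun t : ℝ => t ^ (s - 1) * exp (-t) :=
  (ae_restrict_iff' measurableSet_Ioi).2 <| .of_forall fun t ht => by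
    have : 0 < t := hw.trans_lt ht
    positivity

lemma upperGamma_zero (hs : 0 < s) : upperGamma s 0 = Gamma s := by
  simp only [upperGamma, Gamma_eq_integral hs, mul_comm]

lemma upperGamma_antitoneOn (hs : 0 < s) : AntitoneOn (upperGamma s) (Ici 0) :=
  fun _ hw _ _ hww' =>
    setIntegral_mono_set (integrableOn_rpow_sub_one_mul_exp_neg hs hw)
      (rpow_sub_one_mul_exp_neg_nonneg_ae hw) (Ioi_subset_Ioi hww').eventuallyLE

lemma upperGamma_le_Gamma (hs : 0 < s) (hw : 0 ≤ w) : upperGamma s w ≤ Gamma s :=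
  upperGamma_zero hs ▸ upperGamma_antitoneOn hs self_mem_Ici hw hw

lemma upperGamma_pos (hs : 0 < s) (hw : 0 ≤ w) : 0 < upperGamma s w := by
  rw [upperGamma, setIntegral_pos_iff_support_of_nonneg_ae
    (rpow_sub_one_mul_exp_neg_nonneg_ae hw) (integrableOn_rpow_sub_one_mul_exp_neg hs hw)]
  have hsupp : Ioi w ⊆ Function.support (fun t : ℝ => t ^ (s - 1) * exp (-t)) ∩ Ioi w :=
    fun t ht => ⟨ne_of_gt (by have : 0 < t := hw.trans_lt ht; positivity), ht⟩
  exact (measure_mono hsupp).trans_lt' (by simp)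

-- On `t > w` the integrand is at most `t ^ s * exp (-t) / w`.
lemma upperGamma_le_Gamma_add_one_div (hs : 0 < s) (hw : 0 < w) :
    upperGamma s w ≤ Gamma (s + 1) / w := by
  rw [le_div_iff₀ hw, ← upperGamma_zero (by linarith : 0 < s + 1)]
  calc upperGamma s w * w = ∫ t in Ioi w, w * (t ^ (s - 1) * exp (-t)) := by
        rw [upperGamma, integral_const_mul, mul_comm]
    _ ≤ ∫ t in Ioi w, t ^ (s + 1 - 1) * exp (-t) := by
        refine setIntegral_mono_on ((integrableOn_rpow_sub_one_mul_exp_neg hs hw.le).const_mul w)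
          (integrableOn_rpow_sub_one_mul_exp_neg (by linarith) hw.le) measurableSet_Ioi
          fun t ht => ?_
        have ht0 : 0 < t := hw.trans ht
        have : t ^ s = t * t ^ (s - 1) := by rw [rpow_sub_one ht0.ne', mul_div_cancel₀ _ ht0.ne']
        rw [add_sub_cancel_right, this, ← mul_assoc]
        exact mul_le_mul_of_nonneg_right (mul_le_mul_of_nonneg_right ht.le (by positivity))
          (by positivity)
    _ ≤ upperGamma (s + 1) 0 :=
        upperGamma_antitoneOn (by linarith) self_mem_Ici (mem_Ici.2 hw.le) hw.le

end upperGamma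

lemma setIntegral_Ioc_rpow_mul_exp_neg_div (a : ℝ) {c r : ℝ} (hc : 0 < c) (hr : 0 < r) :
    ∫ u in Ioc 0 r, u ^ (-(a + 1)) * exp (-c / u) = c ^ (-a) * upperGamma a (c / r) := by
  have himage : (fun u : ℝ => c / u) '' Ioc 0 r = Ici (c / r) := by
    ext t
    refine ⟨?_, fun ht => ?_⟩
    · rintro ⟨u, ⟨hu0, hur⟩, rfl⟩
      exact div_le_div_of_nonneg_left hc.le hu0 hur
    · have ht0 : 0 < t := (div_pos hc hr).trans_le ht
      exact ⟨c / t, ⟨div_pos hc ht0, (div_le_comm₀ hr ht0).1 ht⟩, div_div_cancel₀ hc.ne'⟩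
  have hderiv : ∀ u ∈ Ioc (0 : ℝ) r,
      HasDerivWithinAt (fun u : ℝ => c / u) (-(c / u ^ 2)) (Ioc 0 r) u := fun u hu => by
    simpa [div_eq_mul_inv, neg_div, mul_neg] using
      ((hasDerivAt_inv hu.1.ne').const_mul c).hasDerivWithinAt
  have hinj : InjOn (fun u : ℝ => c / u) (Ioc 0 r) := fun u _ v _ h => by
    simpa [div_div_cancel₀ hc.ne'] using congrArg (c / ·) h
  rw [upperGamma, ← integral_Ici_eq_integral_Ioi, ← himage,
    integral_image_eq_integral_abs_deriv_smul measurableSet_Ioc hderiv hinj, ← integral_const_mul]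
  refine setIntegral_congr_fun measurableSet_Ioc fun u ⟨hu, _⟩ => ?_
  rw [abs_neg, abs_of_pos (by positivity), smul_eq_mul, rpow_sub_one (by positivity),
    div_rpow hc.le hu.le, rpow_neg hc.le, rpow_neg hu.le, rpow_add_one hu.ne', neg_div]
  field_simp

lemma Nker_eq_upperGamma (d : ℕ) {β r s : ℝ} (hβ : 0 < β) (hr : 0 < r) (hs : 0 < s) :
    Nker d β r s = β ^ (-((d : ℝ) - 1) / 2) * s ^ (-((d : ℝ) - 1)) *
      upperGamma (((d : ℝ) - 1) / 2) (β * s ^ 2 / r) := by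
  rw [Nker, show -((d : ℝ) + 1) / 2 = -(((d : ℝ) - 1) / 2 + 1) by ring,
    setIntegral_Ioc_rpow_mul_exp_neg_div _ (by positivity) hr, mul_rpow hβ.le (by positivity),
    ← rpow_natCast, ← rpow_mul hs.le]
  congr 3 <;> push_cast <;> ring

section Nker

variable {d : ℕ} {β r s : ℝ}

lemma cast_sub_one_div_two_pos (hd : 1 < d) : 0 < ((d : ℝ) - 1) / 2 := by
  have : (1 : ℝ) < d := by exact_mod_cast hd
  linarith

lemma Nker_nonneg : 0 ≤ Nker d β r s :=
  setIntegral_nonneg measurableSet_Ioc fun u hu => by have := hu.1; positivity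

lemma mul_rpow_le_Nker (hd : 1 < d) (hβ : 0 < β) (hr : 0 < r) (hs : 0 < s) (hsr : s ≤ √r) :
    β ^ (-((d : ℝ) - 1) / 2) * upperGamma (((d : ℝ) - 1) / 2) β * s ^ (-((d : ℝ) - 1)) ≤
      Nker d β r s := by
  have hw : β * s ^ 2 / r ≤ β := by
    rw [div_le_iff₀ hr]
    exact mul_le_mul_of_nonneg_left ((le_sqrt hs.le hr.le).1 hsr) hβ.le
  rw [Nker_eq_upperGamma d hβ hr hs, mul_right_comm]
  gcongr
  exact upperGamma_antitoneOn (cast_sub_one_div_two_pos hd) (mem_Ici.2 (by positivity))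
    (mem_Ici.2 hβ.le) hw

lemma Nker_le_mul_Hker_one (hd : 1 < d) (hβ : 0 < β) (hr : 0 < r) (hs : 0 < s) :
    Nker d β r s ≤ β ^ (-((d : ℝ) - 1) / 2) *
      max (Gamma (((d : ℝ) - 1) / 2)) (Gamma (((d : ℝ) - 1) / 2 + 1) / β) * Hker d 1 r s := by
  set a : ℝ := ((d : ℝ) - 1) / 2
  have ha : 0 < a := cast_sub_one_div_two_pos hd
  have hrpow : s ^ (-((d : ℝ) - 1 + 2 * 1)) = s ^ (-((d : ℝ) - 1)) / s ^ 2 := by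
    rw [show -((d : ℝ) - 1 + 2 * 1) = -((d : ℝ) - 1) - 2 by ring, rpow_sub hs, rpow_two]
  rw [Nker_eq_upperGamma d hβ hr hs, Hker, rpow_one, hrpow, mul_min_of_nonneg _ _ (by positivity)]
  refine le_min ?_ ?_
  · calc β ^ (-((d : ℝ) - 1) / 2) * s ^ (-((d : ℝ) - 1)) * upperGamma a (β * s ^ 2 / r)
        ≤ β ^ (-((d : ℝ) - 1) / 2) * s ^ (-((d : ℝ) - 1)) * Gamma a := by
          gcongr
          exact upperGamma_le_Gamma ha (by positivity)
      _ ≤ _ := by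
          rw [mul_right_comm]
          gcongr
          exact le_max_left _ _
  · calc β ^ (-((d : ℝ) - 1) / 2) * s ^ (-((d : ℝ) - 1)) * upperGamma a (β * s ^ 2 / r)
        ≤ β ^ (-((d : ℝ) - 1) / 2) * s ^ (-((d : ℝ) - 1)) *
            (Gamma (a + 1) / (β * s ^ 2 / r)) := by
          gcongr
          exact upperGamma_le_Gamma_add_one_div ha (by positivity)
      _ = β ^ (-((d : ℝ) - 1) / 2) * (Gamma (a + 1) / β) *
            (r * (s ^ (-((d : ℝ) - 1)) / s ^ 2)) := by
          field_simp
      _ ≤ _ := by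
          gcongr
          exact le_max_right _ _

end Nker

/-- Explicit formula and two-sided control for `N^β`. -/
theorem Nker_identity_and_bounds (d : ℕ) (hd : 2 ≤ d) (β : ℝ) (hβ : 0 < β) :
    (∀ r : ℝ, 0 < r → ∀ x : Euc d, x ≠ 0 →
        Nker d β r ‖x‖ =
          β ^ (-((d : ℝ) - 1) / 2) * ‖x‖ ^ (-((d : ℝ) - 1)) *
            ∫ t in Set.Ioi (β * ‖x‖ ^ 2 / r), t ^ (((d : ℝ) - 3) / 2) * Real.exp (-t)) ∧
      ∃ c₁ c₂ : ℝ, 0 < c₁ ∧ 0 < c₂ ∧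
        ∀ r : ℝ, 0 < r → ∀ x : Euc d, x ≠ 0 →
          (if ‖x‖ ≤ Real.sqrt r then c₁ * ‖x‖ ^ (-((d : ℝ) - 1)) else 0) ≤ Nker d β r ‖x‖ ∧
            Nker d β r ‖x‖ ≤ c₂ * Hker d 1 r ‖x‖ := by
  have ha := cast_sub_one_div_two_pos hd
  refine ⟨fun r hr x hx => ?_, β ^ (-((d : ℝ) - 1) / 2) * upperGamma (((d : ℝ) - 1) / 2) β, _,
    mul_pos (rpow_pos_of_pos hβ _) (upperGamma_pos ha hβ.le),
    mul_pos (rpow_pos_of_pos hβ _) (lt_max_of_lt_left (Gamma_pos_of_pos ha)),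
    fun r hr x hx => ⟨?_, Nker_le_mul_Hker_one hd hβ hr (norm_pos_iff.2 hx)⟩⟩
  · rw [Nker_eq_upperGamma d hβ hr (norm_pos_iff.2 hx), upperGamma,
      show ((d : ℝ) - 1) / 2 - 1 = ((d : ℝ) - 3) / 2 by ring]
  · split_ifs with hxr
    · exact mul_rpow_le_Nker hd hβ hr (norm_pos_iff.2 hx) hxr
    · exact Nker_nonneg
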